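/- Let G be a finite simple graph and let H be a finite simple graph satisfying: (1) V(G) ⊆ V(H); (2) for every edge uv of G, uv is not an edge of H and there are three paths P_1^{uv}, P_2^{uv}, P_3^{uv} in H from u to v, each of length at least 3, which pairwise share only the vertices u and v; moreover, for all edges uv and st of G and all i, j ∈ {1,2,3} with (uv,i) ≠ (st,j), V(P_i^{uv}) ∩ V(P_j^{st}) = {u,v} ∩ {s,t}; and (3) every edge of H lies on some path P_i^{e} with e an edge of G and i ∈ {1,2,3}. Then there exists a 3-list-assignment L of H such that: L(u) = {1,2,3} for every u ∈ V(G); for every L-coloring f of H, the restriction of f to V(G) is a proper 3-coloring of G; and for every proper 3-coloring g of G there is an L-coloring g' of H with g' restricted to V(G) equal to g. -/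

import Mathlib

/-!
On the path `P_i^{uv} = x_0 x_1 ⋯ x_k` give the interior vertex `x_m` the two-element list
`PathGadget.lists i k m`, and every other vertex the full list. These lists admit no colouring of
the path with both ends coloured `i`, but admit one for every pair of distinct end colours.
Since the paths are internally disjoint and cover `H`, an `L`-colouring of `H` colours the three
paths joining the ends of an edge `uv` of `G`, and the `i`-th of them rules out `f u = f v = i`;
conversely, a proper colouring of `G` extends along each path separately.
-/

open SimpleGraph Function

lemma Finset.eq_of_mem_pair_of_ne {α : Type*} [DecidableEq α] {x a b : α}
    (h : x ∈ ({a, b} : Finset α)) (hne : x ≠ a) : x = b := by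
  simpa [hne] using h

namespace PathGadget

def altColor (i : Fin 3) (m : ℕ) : Fin 3 := if m % 2 = 1 then i + 1 else i + 2

@[grind .] lemma altColor_ne_self (i : Fin 3) (m : ℕ) : altColor i m ≠ i := by
  unfold altColor; split_ifs <;> omega

@[grind .] lemma altColor_succ_ne (i : Fin 3) (m : ℕ) : altColor i (m + 1) ≠ altColor i m := by
  unfold altColor; split_ifs <;> omega

@[simp, grind =] lemma altColor_add_two (i : Fin 3) (m : ℕ) :
    altColor i (m + 2) = altColor i m := by
  simp [altColor, Nat.add_mod_right]

/-- If both ends are coloured `i`, the interior colours are forced to be `altColor i 1`,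
`altColor i 2`, …, and the list of the last interior vertex only offers the colour forced on its
predecessor. -/
def lists (i : Fin 3) (k m : ℕ) : Finset (Fin 3) :=
  if m = 1 then {i, altColor i 1}
  else if m + 1 = k then {i, altColor i k}
  else {altColor i m, altColor i (m + 1)}

def IsColoring (i : Fin 3) (k : ℕ) (c : ℕ → Fin 3) : Prop :=
  (∀ m < k, c m ≠ c (m + 1)) ∧ ∀ m, 0 < m → m < k → c m ∈ lists i k m

lemma IsColoring.ne {i : Fin 3} {k : ℕ} {c : ℕ → Fin 3} (hc : IsColoring i k c)
    (hk : 3 ≤ k) (h0 : c 0 = i) : c k ≠ i := by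
  obtain ⟨n, rfl⟩ : ∃ n, k = n + 3 := ⟨k - 3, by omega⟩
  intro hk
  have forced : ∀ m ≤ n, c (m + 1) = altColor i (m + 1) := by
    intro m hm
    induction m with
    | zero =>
      refine Finset.eq_of_mem_pair_of_ne ?_ (h0 ▸ (hc.1 0 (by omega)).symm)
      simpa [lists] using hc.2 1 one_pos (by omega)
    | succ m ih =>
      refine Finset.eq_of_mem_pair_of_ne (a := altColor i (m + 1 + 2)) ?_ ?_
      · have := hc.2 (m + 2) (by omega) (by omega)
        rwa [lists, if_neg (by omega), if_neg (by omega), Finset.pair_comm] at this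
      · rw [altColor_add_two, ← ih (by omega)]
        exact (hc.1 (m + 1) (by omega)).symm
  have last : c (n + 2) = altColor i (n + 3) := by
    refine Finset.eq_of_mem_pair_of_ne ?_ (hk ▸ hc.1 (n + 2) (by omega))
    simpa [lists] using hc.2 (n + 2) (by omega) (by omega)
  refine hc.1 (n + 1) (by omega) ?_
  rw [forced n le_rfl, last, show n + 3 = n + 1 + 2 by omega, altColor_add_two]

lemma exists_isColoring (i : Fin 3) {k : ℕ} (hk : 3 ≤ k) {a b : Fin 3} (hab : a ≠ b) :
    ∃ c, IsColoring i k c ∧ c 0 = a ∧ c k = b := by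
  obtain ⟨n, rfl⟩ : ∃ n, k = n + 3 := ⟨k - 3, by omega⟩
  by_cases hA : a ≠ altColor i 1 ∧ b ≠ i
  · refine ⟨fun m => if m = 0 then a else if m = n + 3 then b else if m = n + 2 then i
      else altColor i m, ⟨fun m hm => ?_, fun m h0 hm => ?_⟩, by simp, by simp⟩ <;> grind [lists]
  by_cases hB : a ≠ i ∧ b ≠ altColor i (n + 3)
  · refine ⟨fun m => if m = 0 then a else if m = n + 3 then b else if m = 1 then i
      else altColor i (m + 1), ⟨fun m hm => ?_, fun m h0 hm => ?_⟩, by simp, by simp⟩ <;>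
      grind [lists]
  -- Only `(a, b) = (i + 1, i + 2)` with `k` even is left, so the path has length at least 4.
  have hn : n ≠ 0 := by rintro rfl; grind
  refine ⟨fun m => if m = 0 then a else if m = n + 3 then b else if m = 1 ∨ m = n + 2 then i
    else altColor i m, ⟨fun m hm => ?_, fun m h0 hm => ?_⟩, by simp, by simp⟩ <;> grind [lists]

end PathGadget

namespace SimpleGraph

lemma Walk.IsPath.getVert_ne_start_and_end {W : Type*} {H : SimpleGraph W} {u v : W}
    {p : H.Walk u v} (hp : p.IsPath) {m : ℕ} (hm : m ∈ Set.Ioo 0 p.length) :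
    p.getVert m ≠ u ∧ p.getVert m ≠ v := by
  rw [Ne, Ne, hp.getVert_eq_start_iff hm.2.le, hp.getVert_eq_end_iff hm.2.le]
  exact ⟨hm.1.ne', hm.2.ne⟩

lemma Walk.ne_of_mem_edges_of_forall_getVert {W α : Type*} {H : SimpleGraph W} {u v x y : W}
    {p : H.Walk u v} (f : W → α) (hf : ∀ m < p.length, f (p.getVert m) ≠ f (p.getVert (m + 1)))
    (hxy : s(x, y) ∈ p.edges) : f x ≠ f y := by
  obtain ⟨m, hm, hmxy⟩ := (p.mk_mem_edges_iff_exists).1 hxy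
  rcases Sym2.eq_iff.1 hmxy with ⟨rfl, rfl⟩ | ⟨rfl, rfl⟩
  exacts [hf m hm, (hf m hm).symm]

variable {W : Type*} [LinearOrder W] {G H : SimpleGraph W}

/-- The paths of the family, each indexed once: by its edge `uv` of `G`, oriented so that `u < v`,
and its number `i`. -/
@[ext]
structure PathIndex (G : SimpleGraph W) where
  fst : W
  snd : W
  adj : G.Adj fst snd
  lt : fst < snd
  idx : Fin 3

lemma PathIndex.eq_of_edge_eq {t t' : G.PathIndex} (h : s(t.fst, t.snd) = s(t'.fst, t'.snd))
    (hidx : t.idx = t'.idx) : t = t' := by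
  rcases Sym2.eq_iff.1 h with ⟨h1, h2⟩ | ⟨h1, h2⟩
  · exact PathIndex.ext h1 h2 hidx
  · exact absurd (h1 ▸ h2 ▸ t.lt) (lt_asymm t'.lt)

variable (P : ∀ u v : W, G.Adj u v → Fin 3 → H.Walk u v)

def PathIndex.walk (t : G.PathIndex) : H.Walk t.fst t.snd := P t.fst t.snd t.adj t.idx

def interiorVertex (q : Σ t : G.PathIndex, Set.Ioo 0 (t.walk P).length) : W :=
  (q.1.walk P).getVert q.2

noncomputable def extendAlongPaths {α : Type*} (φ : G.PathIndex → ℕ → α) (d : W → α) : W → α :=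
  extend (interiorVertex P) (fun q => φ q.1 q.2) d

lemma interiorVertex_injective
    (hpath : ∀ (u v : W) (huv : G.Adj u v) (i : Fin 3), (P u v huv i).IsPath)
    (hdisj : ∀ (u v : W) (huv : G.Adj u v) (i : Fin 3)
        (s t : W) (hst : G.Adj s t) (j : Fin 3),
      (s(u, v) ≠ s(s, t) ∨ i ≠ j) →
      ∀ x : W, (x ∈ (P u v huv i).support ∧ x ∈ (P s t hst j).support) ↔
        ((x = u ∨ x = v) ∧ (x = s ∨ x = t))) :
    Injective (interiorVertex P) := by
  rintro ⟨t, m, hm⟩ ⟨t', m', hm'⟩ (h : (t.walk P).getVert m = (t'.walk P).getVert m')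
  obtain rfl : t = t' := by
    by_contra hne
    have hdiff : s(t.fst, t.snd) ≠ s(t'.fst, t'.snd) ∨ t.idx ≠ t'.idx := by
      by_contra! h'
      exact hne (PathIndex.eq_of_edge_eq h'.1 h'.2)
    have hx := ((hdisj _ _ t.adj t.idx _ _ t'.adj t'.idx hdiff _).1
      ⟨Walk.getVert_mem_support _ m, h ▸ Walk.getVert_mem_support _ m'⟩).1
    have := (hpath _ _ t.adj t.idx).getVert_ne_start_and_end hm
    exact hx.elim this.1 this.2
  obtain rfl : m = m' := (hpath _ _ t.adj t.idx).getVert_injOn hm.2.le hm'.2.le h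
  rfl

lemma interiorVertex_notMem {VG : Set W}
    (hpath : ∀ (u v : W) (huv : G.Adj u v) (i : Fin 3), (P u v huv i).IsPath)
    (hint : ∀ (u v : W) (huv : G.Adj u v) (i : Fin 3),
      ∀ x ∈ (P u v huv i).support, x ∈ VG → x = u ∨ x = v)
    (q : Σ t : G.PathIndex, Set.Ioo 0 (t.walk P).length) : interiorVertex P q ∉ VG := fun hx =>
  have hne := (hpath _ _ q.1.adj q.1.idx).getVert_ne_start_and_end q.2.2
  (hint _ _ _ _ _ (Walk.getVert_mem_support _ _) hx).elim hne.1 hne.2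

variable {P}

lemma extendAlongPaths_getVert (hinj : Injective (interiorVertex P)) {α : Type*}
    (φ : G.PathIndex → ℕ → α) (d : W → α) (t : G.PathIndex) {m : ℕ}
    (hm : m ∈ Set.Ioo 0 (t.walk P).length) :
    extendAlongPaths P φ d ((t.walk P).getVert m) = φ t m :=
  hinj.extend_apply (fun q => φ q.1 q.2) d ⟨t, m, hm⟩

lemma extendAlongPaths_of_mem {VG : Set W} (hVG : ∀ q, interiorVertex P q ∉ VG) {α : Type*}
    (φ : G.PathIndex → ℕ → α) (d : W → α) {x : W} (hx : x ∈ VG) :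
    extendAlongPaths P φ d x = d x :=
  extend_apply' _ _ _ fun ⟨q, hq⟩ => hVG q (hq ▸ hx)

lemma extendAlongPaths_rel (hinj : Injective (interiorVertex P)) {α β : Type*}
    (R : α → β → Prop) {φ : G.PathIndex → ℕ → α} {ψ : G.PathIndex → ℕ → β} {d : W → α}
    {e : W → β} (hφψ : ∀ t, ∀ m ∈ Set.Ioo 0 (t.walk P).length, R (φ t m) (ψ t m))
    (hde : ∀ x, R (d x) (e x)) (x : W) :
    R (extendAlongPaths P φ d x) (extendAlongPaths P ψ e x) := by
  by_cases hx : ∃ q, interiorVertex P q = x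
  · obtain ⟨⟨t, m, hm⟩, rfl⟩ := hx
    rw [extendAlongPaths, extendAlongPaths, hinj.extend_apply, hinj.extend_apply]
    exact hφψ t m hm
  · rw [extendAlongPaths, extendAlongPaths, extend_apply' _ _ _ hx, extend_apply' _ _ _ hx]
    exact hde x

variable (P) in
noncomputable def gadgetLists : W → Finset (Fin 3) :=
  extendAlongPaths P (fun t => PathGadget.lists t.idx (t.walk P).length) fun _ => Finset.univ

lemma PathIndex.isColoring_comp_getVert (hinj : Injective (interiorVertex P)) {f : W → Fin 3}
    (hf : ∀ x y, H.Adj x y → f x ≠ f y) (hfL : ∀ x, f x ∈ gadgetLists P x) (t : G.PathIndex) :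
    PathGadget.IsColoring t.idx (t.walk P).length fun m => f ((t.walk P).getVert m) := by
  refine ⟨fun m hm => hf _ _ ((t.walk P).adj_getVert_succ hm), fun m h0 hm => ?_⟩
  have := hfL ((t.walk P).getVert m)
  rwa [gadgetLists, extendAlongPaths_getVert hinj _ _ t ⟨h0, hm⟩] at this

lemma exists_pathIndex_mem_edges
    (hsymm : ∀ (u v : W) (huv : G.Adj u v) (i : Fin 3),
      P v u huv.symm i = (P u v huv i).reverse)
    (hcover : ∀ x y : W, H.Adj x y →
      ∃ (u v : W) (huv : G.Adj u v) (i : Fin 3), s(x, y) ∈ (P u v huv i).edges)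
    {x y : W} (hxy : H.Adj x y) : ∃ t : G.PathIndex, s(x, y) ∈ (t.walk P).edges := by
  obtain ⟨u, v, huv, i, hedge⟩ := hcover x y hxy
  rcases lt_or_gt_of_ne huv.ne with huv' | hvu
  · exact ⟨⟨u, v, huv, huv', i⟩, hedge⟩
  · refine ⟨⟨v, u, huv.symm, hvu, i⟩, ?_⟩
    rw [PathIndex.walk, hsymm, Walk.edges_reverse, List.mem_reverse]
    exact hedge

lemma exists_gadgetLists_coloring_extending {VG : Set W}
    (hinj : Injective (interiorVertex P)) (hVG : ∀ q, interiorVertex P q ∉ VG)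
    (hsupp : ∀ u v : W, G.Adj u v → u ∈ VG ∧ v ∈ VG)
    (hsymm : ∀ (u v : W) (huv : G.Adj u v) (i : Fin 3),
      P v u huv.symm i = (P u v huv i).reverse)
    (hlen : ∀ (u v : W) (huv : G.Adj u v) (i : Fin 3), 3 ≤ (P u v huv i).length)
    (hcover : ∀ x y : W, H.Adj x y →
      ∃ (u v : W) (huv : G.Adj u v) (i : Fin 3), s(x, y) ∈ (P u v huv i).edges)
    {g : W → Fin 3} (hg : ∀ u v, G.Adj u v → g u ≠ g v) :
    ∃ g' : W → Fin 3, (∀ x y, H.Adj x y → g' x ≠ g' y) ∧ (∀ x, g' x ∈ gadgetLists P x) ∧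
      ∀ u ∈ VG, g' u = g u := by
  choose c hc hc0 hck using fun t : G.PathIndex =>
    PathGadget.exists_isColoring t.idx (hlen _ _ t.adj t.idx) (hg _ _ t.adj)
  have hval : ∀ t : G.PathIndex, ∀ m ≤ (t.walk P).length,
      extendAlongPaths P c g ((t.walk P).getVert m) = c t m := by
    intro t m hm
    rcases m.eq_zero_or_pos with rfl | h0
    · rw [Walk.getVert_zero, hc0, extendAlongPaths_of_mem hVG _ _ (hsupp _ _ t.adj).1]
    rcases hm.eq_or_lt with rfl | hlt
    · rw [Walk.getVert_length, extendAlongPaths_of_mem hVG _ _ (hsupp _ _ t.adj).2]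
      exact (hck t).symm
    exact extendAlongPaths_getVert hinj _ _ t ⟨h0, hlt⟩
  refine ⟨extendAlongPaths P c g, fun x y hxy => ?_,
    extendAlongPaths_rel hinj (· ∈ ·) (fun t m hm => (hc t).2 m hm.1 hm.2)
      (fun _ => Finset.mem_univ _),
    fun u hu => extendAlongPaths_of_mem hVG _ _ hu⟩
  obtain ⟨t, ht⟩ := exists_pathIndex_mem_edges hsymm hcover hxy
  refine Walk.ne_of_mem_edges_of_forall_getVert _ (fun m hm => ?_) ht
  rw [hval t m hm.le, hval t (m + 1) hm]
  exact (hc t).1 m hm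

end SimpleGraph

theorem realization_list_assignment
    {W : Type*}
    (G H : SimpleGraph W) (VG : Set W)
    (hsupp : ∀ u v : W, G.Adj u v → u ∈ VG ∧ v ∈ VG)
    (P : ∀ u v : W, G.Adj u v → Fin 3 → H.Walk u v)
    (hsymm : ∀ (u v : W) (huv : G.Adj u v) (i : Fin 3),
      P v u huv.symm i = (P u v huv i).reverse)
    (hpath : ∀ (u v : W) (huv : G.Adj u v) (i : Fin 3), (P u v huv i).IsPath)
    (hlen : ∀ (u v : W) (huv : G.Adj u v) (i : Fin 3), 3 ≤ (P u v huv i).length)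
    (hint : ∀ (u v : W) (huv : G.Adj u v) (i : Fin 3),
      ∀ x ∈ (P u v huv i).support, x ∈ VG → x = u ∨ x = v)
    (hdisj : ∀ (u v : W) (huv : G.Adj u v) (i : Fin 3)
        (s t : W) (hst : G.Adj s t) (j : Fin 3),
      (s(u, v) ≠ s(s, t) ∨ i ≠ j) →
      ∀ x : W, (x ∈ (P u v huv i).support ∧ x ∈ (P s t hst j).support) ↔
        ((x = u ∨ x = v) ∧ (x = s ∨ x = t)))
    (hcover : ∀ x y : W, H.Adj x y →
      ∃ (u v : W) (huv : G.Adj u v) (i : Fin 3), s(x, y) ∈ (P u v huv i).edges) :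
    ∃ L : W → Finset (Fin 3),
      (∀ u ∈ VG, L u = (Finset.univ : Finset (Fin 3))) ∧
      (∀ f : W → Fin 3, (∀ x y, H.Adj x y → f x ≠ f y) → (∀ x, f x ∈ L x) →
        ∀ u v, G.Adj u v → f u ≠ f v) ∧
      (∀ g : W → Fin 3, (∀ u v, G.Adj u v → g u ≠ g v) →
        ∃ g' : W → Fin 3, (∀ x y, H.Adj x y → g' x ≠ g' y) ∧ (∀ x, g' x ∈ L x) ∧
          ∀ u ∈ VG, g' u = g u) := by
  let : LinearOrder W := IsWellOrder.linearOrder WellOrderingRel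
  have hinj := interiorVertex_injective P hpath hdisj
  have hVG := interiorVertex_notMem P hpath hint
  refine ⟨gadgetLists P, fun u hu => extendAlongPaths_of_mem hVG _ _ hu, ?_,
    fun g hg => exists_gadgetLists_coloring_extending hinj hVG hsupp hsymm hlen hcover hg⟩
  intro f hf hfL u v huv
  wlog huv' : u < v generalizing u v
  · exact (this v u huv.symm (lt_of_le_of_ne (not_lt.1 huv') huv.ne.symm)).symm
  have := (PathIndex.isColoring_comp_getVert hinj hf hfL ⟨u, v, huv, huv', f u⟩).ne
    (hlen u v huv _) (congrArg f (Walk.getVert_zero _))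
  exact (Walk.getVert_length _ ▸ this).symm
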